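/- Let 0 < α < 1, β > 0, and let ℓ and N be nonnegative integers. There exists a constant C > 0 (depending only on α, β, ℓ, N and φ) such that for every integer k ≥ 1, every t > 0 and every s > 0, the function s ↦ μ̂_{α,β,k}(s/t) satisfies |(d/ds)^ℓ [ μ̂_{α,β,k}(s/t) ]| ≤ C · 2^{k(ℓ+1−β−N(1−α))} · t^{N−ℓ} · s^{−N}. -/

import Mathlib

open MeasureTheory
open Set

/-- The dyadic piece `μ̂_{α,β,k}` of the Fourier cosine transform of the oscillating
multiplier: `μ̂_{α,β,k}(τ) = 2 ∫₀^∞ λ^{−β} e^{iλ^α} φ(λ/2^k) cos(τλ) dλ`. -/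
noncomputable def muHatPiece (α β : ℝ) (φ : ℝ → ℝ) (k : ℕ) (τ : ℝ) : ℂ :=
  (2 : ℂ) * ∫ l in Set.Ioi (0:ℝ),
    ((l ^ (-β) * φ (l / 2 ^ k) * Real.cos (τ * l) : ℝ) : ℂ) *
      Complex.exp (Complex.I * ((l ^ α : ℝ) : ℂ))

set_option maxHeartbeats 1000000

section PhiFacts
variable {φ : ℝ → ℝ}

lemma phi_tsupport (hφsupp : ∀ x : ℝ, φ x ≠ 0 → 1 / 2 ≤ |x| ∧ |x| ≤ 2) :
    tsupport φ ⊆ {x : ℝ | 1/2 ≤ |x|} ∩ {x : ℝ | |x| ≤ 2} := by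
  apply closure_minimal
  · intro x hx
    exact hφsupp x hx
  · exact (isClosed_le continuous_const continuous_abs).inter
      (isClosed_le continuous_abs continuous_const)

lemma phi_hcs (hφsupp : ∀ x : ℝ, φ x ≠ 0 → 1 / 2 ≤ |x| ∧ |x| ≤ 2) :
    HasCompactSupport φ := by
  apply HasCompactSupport.intro (isCompact_Icc : IsCompact (Icc (-2:ℝ) 2))
  intro x hx
  by_contra h
  rcases hφsupp x h with ⟨_, h2⟩
  rw [abs_le] at h2
  exact hx ⟨h2.1, h2.2⟩

lemma phi_iter_tsupport (j : ℕ) : tsupport (iteratedDeriv j φ) ⊆ tsupport φ := by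
  induction j with
  | zero => simp [iteratedDeriv_zero]
  | succ j ih =>
    rw [iteratedDeriv_succ]
    refine subset_trans ?_ ih
    refine closure_minimal ?_ isClosed_closure
    exact support_deriv_subset

lemma phi_iter_hcs (hφsupp : ∀ x : ℝ, φ x ≠ 0 → 1 / 2 ≤ |x| ∧ |x| ≤ 2) (j : ℕ) :
    HasCompactSupport (iteratedDeriv j φ) :=
  HasCompactSupport.of_support_subset_isCompact (phi_hcs hφsupp)
    ((subset_closure).trans (phi_iter_tsupport j))

lemma phi_iter_zero (hφsupp : ∀ x : ℝ, φ x ≠ 0 → 1 / 2 ≤ |x| ∧ |x| ≤ 2) (j : ℕ)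
    {x : ℝ} (hx : |x| < 1/2 ∨ 2 < |x|) : iteratedDeriv j φ x = 0 := by
  apply image_eq_zero_of_notMem_tsupport
  intro hmem
  obtain ⟨h1, h2⟩ := phi_tsupport hφsupp ((phi_iter_tsupport j) hmem)
  rcases hx with h | h
  · simp only [Set.mem_setOf_eq] at h1; linarith
  · simp only [Set.mem_setOf_eq] at h2; linarith

lemma phi_iter_bound (hφ : ContDiff ℝ (⊤ : ℕ∞) φ)
    (hφsupp : ∀ x : ℝ, φ x ≠ 0 → 1 / 2 ≤ |x| ∧ |x| ≤ 2) (j : ℕ) :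
    ∃ M : ℝ, 0 ≤ M ∧ ∀ x, |iteratedDeriv j φ x| ≤ M := by
  obtain ⟨M, hM⟩ := (phi_iter_hcs hφsupp j).exists_bound_of_continuous
    (hφ.continuous_iteratedDeriv j (by exact (by exact_mod_cast le_top)))
  exact ⟨M, (abs_nonneg _).trans (hM 0), fun x => hM x⟩

end PhiFacts
noncomputable def sTerm (α : ℝ) (φ : ℝ → ℝ) (c : ℂ) (δ : ℝ) (j : ℕ) (k : ℕ) (l : ℝ) : ℂ :=
  c * ((l ^ δ : ℝ) : ℂ) * ((iteratedDeriv j φ (l / 2 ^ k) : ℝ) : ℂ) *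
    ((((2:ℝ) ^ k)⁻¹ ^ j : ℝ) : ℂ) * Complex.exp (Complex.I * ((l ^ α : ℝ) : ℂ))

inductive DyadRep (α : ℝ) (φ : ℝ → ℝ) : ℝ → (ℕ → ℝ → ℂ) → Prop
  | term (e : ℝ) (c : ℂ) (δ : ℝ) (j : ℕ) (h : δ - j ≤ e) :
      DyadRep α φ e (fun k l => sTerm α φ c δ j k l)
  | zero (e : ℝ) : DyadRep α φ e (fun _ _ => 0)
  | add {e : ℝ} {f g : ℕ → ℝ → ℂ} (hf : DyadRep α φ e f) (hg : DyadRep α φ e g) :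
      DyadRep α φ e (fun k l => f k l + g k l)

lemma norm_exp_I_mul_ofReal (r : ℝ) : ‖Complex.exp (Complex.I * (r : ℂ))‖ = 1 := by
  rw [mul_comm, Complex.norm_exp_ofReal_mul_I]

lemma rpow_abs_le {u : ℝ} (h1 : 1/2 ≤ u) (h2 : u ≤ 2) (δ : ℝ) : u ^ δ ≤ 2 ^ |δ| := by
  have hu : 0 < u := lt_of_lt_of_le (by norm_num) h1
  rw [Real.rpow_def_of_pos hu, Real.rpow_def_of_pos (by norm_num : (0:ℝ) < 2)]
  apply Real.exp_le_exp.mpr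
  have hlog : |Real.log u| ≤ Real.log 2 := by
    rw [abs_le]
    constructor
    · have h := Real.log_le_log (by norm_num : (0:ℝ) < 1/2) h1
      rw [show (1:ℝ)/2 = 2⁻¹ by norm_num, Real.log_inv] at h
      linarith
    · exact Real.log_le_log hu h2
  calc Real.log u * δ ≤ |Real.log u * δ| := le_abs_self _
    _ = |Real.log u| * |δ| := abs_mul _ _
    _ ≤ Real.log 2 * |δ| := mul_le_mul_of_nonneg_right hlog (abs_nonneg δ)

lemma two_pow_helper (k j : ℕ) (δ : ℝ) :
    ((2:ℝ)^k)^δ * ((2:ℝ)^k)⁻¹^j = (2:ℝ) ^ ((k:ℝ) * (δ - (j:ℝ))) := by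
  rw [← Real.rpow_natCast 2 k, ← Real.rpow_mul (by norm_num : (0:ℝ) ≤ 2),
    ← Real.rpow_neg_one ((2:ℝ) ^ ((k:ℝ))), ← Real.rpow_mul (by norm_num : (0:ℝ) ≤ 2),
    ← Real.rpow_natCast ((2:ℝ) ^ ((k:ℝ) * (-1))) j, ← Real.rpow_mul (by norm_num : (0:ℝ) ≤ 2),
    ← Real.rpow_add (by norm_num : (0:ℝ) < 2)]
  congr 1
  ring

lemma DyadRep.eq_zero {α : ℝ} {φ : ℝ → ℝ}
    (hφsupp : ∀ x : ℝ, φ x ≠ 0 → 1 / 2 ≤ |x| ∧ |x| ≤ 2) {e : ℝ} {f : ℕ → ℝ → ℂ}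
    (hf : DyadRep α φ e f) :
    ∀ k : ℕ, ∀ l : ℝ, 0 < l → (l < 2^k/2 ∨ 2*2^k < l) → f k l = 0 := by
  induction hf with
  | term c δ j h =>
    intro k l hl hout
    have h2k : (0:ℝ) < 2^k := by positivity
    have : iteratedDeriv j φ (l / 2^k) = 0 := by
      apply phi_iter_zero hφsupp
      rw [abs_of_pos (by positivity)]
      rcases hout with h' | h'
      · left; rw [div_lt_iff₀ h2k]; linarith
      · right; rw [lt_div_iff₀ h2k]; linarith
    simp [sTerm, this]
  | zero => intro _ _ _ _; rfl
  | add hf hg ihf ihg =>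
    intro k l hl hout
    simp [ihf k l hl hout, ihg k l hl hout]

lemma DyadRep.hasDerivAt' {α : ℝ} (hα0 : 0 < α) (hα1 : α < 1) {φ : ℝ → ℝ}
    (hφ : ContDiff ℝ (⊤ : ℕ∞) φ) {e : ℝ} {f : ℕ → ℝ → ℂ} (hf : DyadRep α φ e f) :
    ∃ g : ℕ → ℝ → ℂ, DyadRep α φ (e - (1 - α)) g ∧
      ∀ k : ℕ, ∀ l : ℝ, 0 < l → HasDerivAt (f k) (g k l) l := by
  induction hf with
  | zero => exact ⟨fun _ _ => 0, DyadRep.zero _, fun k l _ => hasDerivAt_const l 0⟩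
  | add hf hg ihf ihg =>
    obtain ⟨g1, hg1, hd1⟩ := ihf
    obtain ⟨g2, hg2, hd2⟩ := ihg
    exact ⟨fun k l => g1 k l + g2 k l, DyadRep.add hg1 hg2,
      fun k l hl => (hd1 k l hl).add (hd2 k l hl)⟩
  | term c δ j h =>
    refine ⟨fun k l => sTerm α φ (c*δ) (δ-1) j k l +
        (sTerm α φ c δ (j+1) k l + sTerm α φ (c*Complex.I*α) (δ+α-1) j k l),
      DyadRep.add (DyadRep.term _ _ _ _ (by push_cast; linarith))
        (DyadRep.add (DyadRep.term _ _ _ _ (by push_cast; linarith))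
          (DyadRep.term _ _ _ _ (by push_cast; linarith))), ?_⟩
    intro k l hl
    have h2k : (0:ℝ) < 2^k := by positivity
    -- pieces
    have h1 : HasDerivAt (fun x : ℝ => ((x ^ δ : ℝ) : ℂ)) ((δ * l ^ (δ-1) : ℝ) : ℂ) l :=
      (Real.hasDerivAt_rpow_const (Or.inl hl.ne')).ofReal_comp
    have hgd : HasDerivAt (iteratedDeriv j φ) (iteratedDeriv (j+1) φ (l / 2^k)) (l / 2^k) := by
      have hdiff : DifferentiableAt ℝ (iteratedDeriv j φ) (l / 2^k) :=
        (hφ.differentiable_iteratedDeriv j (by exact_mod_cast ENat.coe_lt_top j)) (l / 2^k)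
      rw [iteratedDeriv_succ]
      exact hdiff.hasDerivAt
    have hin : HasDerivAt (fun x : ℝ => x / 2^k) (((2:ℝ)^k)⁻¹) l := by
      simpa [one_div] using (hasDerivAt_id l).div_const ((2:ℝ)^k)
    have h2 : HasDerivAt (fun x : ℝ => ((iteratedDeriv j φ (x / 2^k) : ℝ) : ℂ))
        ((iteratedDeriv (j+1) φ (l / 2^k) * ((2:ℝ)^k)⁻¹ : ℝ) : ℂ) l :=
      by have := (hgd.comp l hin).ofReal_comp; exact this
    have hinner : HasDerivAt (fun x : ℝ => Complex.I * ((x ^ α : ℝ) : ℂ))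
        (Complex.I * ((α * l ^ (α-1) : ℝ) : ℂ)) l :=
      ((Real.hasDerivAt_rpow_const (Or.inl hl.ne')).ofReal_comp).const_mul Complex.I
    have hE : HasDerivAt (fun x : ℝ => Complex.exp (Complex.I * ((x ^ α : ℝ) : ℂ)))
        (Complex.exp (Complex.I * ((l ^ α : ℝ) : ℂ)) * (Complex.I * ((α * l ^ (α-1) : ℝ) : ℂ))) l :=
      hinner.cexp
    have hprod := (((h1.const_mul c).mul h2).mul_const
        (((((2:ℝ) ^ k)⁻¹ ^ j : ℝ) : ℂ))).mul hE
    convert hprod using 1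
    · rfl
    · rfl
    simp only [sTerm, Pi.mul_apply]
    have hsplit : l ^ (δ + α - 1) = l ^ δ * l ^ (α - 1) := by
      rw [show δ + α - 1 = δ + (α - 1) by ring, Real.rpow_add hl]
    rw [hsplit, pow_succ]
    push_cast
    ring

lemma DyadRep.norm_bound {α : ℝ} {φ : ℝ → ℝ} (hφ : ContDiff ℝ (⊤ : ℕ∞) φ)
    (hφsupp : ∀ x : ℝ, φ x ≠ 0 → 1 / 2 ≤ |x| ∧ |x| ≤ 2) {e : ℝ} {f : ℕ → ℝ → ℂ}
    (hf : DyadRep α φ e f) :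
    ∃ C : ℝ, 0 < C ∧ ∀ k : ℕ, 1 ≤ k → ∀ l : ℝ, 0 < l →
      ‖f k l‖ ≤ C * (2:ℝ) ^ ((k:ℝ) * e) := by
  induction hf with
  | zero => exact ⟨1, one_pos, fun k _ l _ => by simp; positivity⟩
  | add hf hg ihf ihg =>
    obtain ⟨C1, hC1, hb1⟩ := ihf
    obtain ⟨C2, hC2, hb2⟩ := ihg
    refine ⟨C1 + C2, by linarith, fun k hk l hl => ?_⟩
    calc ‖_ + _‖ ≤ ‖_‖ + ‖_‖ := norm_add_le _ _
      _ ≤ C1 * (2:ℝ) ^ ((k:ℝ) * e) + C2 * (2:ℝ) ^ ((k:ℝ) * e) :=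
          add_le_add (hb1 k hk l hl) (hb2 k hk l hl)
      _ = (C1 + C2) * (2:ℝ) ^ ((k:ℝ) * e) := by ring
  | term c δ j h =>
    obtain ⟨M, hM0, hM⟩ := phi_iter_bound hφ hφsupp j
    refine ⟨‖c‖ * 2 ^ |δ| * M + 1, by positivity, fun k hk l hl => ?_⟩
    have h2k : (0:ℝ) < 2^k := by positivity
    have hpow : (0:ℝ) < (2:ℝ) ^ ((k:ℝ) * e) := Real.rpow_pos_of_pos (by norm_num) _
    by_cases hmem : 2^k/2 ≤ l ∧ l ≤ 2*2^k
    · -- main estimate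
      obtain ⟨hml, hmr⟩ := hmem
      have hu1 : 1/2 ≤ l / 2^k := by rw [le_div_iff₀ h2k]; linarith
      have hu2 : l / 2^k ≤ 2 := by rw [div_le_iff₀ h2k]; linarith
      have hld : l ^ δ ≤ ((2:ℝ)^k)^δ * 2 ^ |δ| := by
        calc l ^ δ = ((2:ℝ)^k)^δ * (l / 2^k)^δ := by
              rw [← Real.mul_rpow (le_of_lt h2k) (by positivity)]
              congr 1
              field_simp
          _ ≤ ((2:ℝ)^k)^δ * 2 ^ |δ| :=
              mul_le_mul_of_nonneg_left (rpow_abs_le hu1 hu2 δ) (by positivity)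
      have hnorm : ‖sTerm α φ c δ j k l‖ =
          ‖c‖ * l ^ δ * |iteratedDeriv j φ (l / 2^k)| * ((2:ℝ)^k)⁻¹^j := by
        simp only [sTerm, norm_mul, Complex.norm_real, Real.norm_eq_abs,
          norm_exp_I_mul_ofReal, mul_one]
        rw [abs_of_nonneg (Real.rpow_nonneg (le_of_lt hl) δ),
          abs_of_nonneg (by positivity : (0:ℝ) ≤ ((2:ℝ)^k)⁻¹^j)]
      rw [hnorm]
      calc ‖c‖ * l ^ δ * |iteratedDeriv j φ (l / 2^k)| * ((2:ℝ)^k)⁻¹^j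
          ≤ ‖c‖ * (((2:ℝ)^k)^δ * 2 ^ |δ|) * M * ((2:ℝ)^k)⁻¹^j := by
            apply mul_le_mul_of_nonneg_right _ (by positivity)
            apply mul_le_mul _ (hM _) (abs_nonneg _) (by positivity)
            exact mul_le_mul_of_nonneg_left hld (norm_nonneg c)
        _ = (‖c‖ * 2 ^ |δ| * M) * (((2:ℝ)^k)^δ * ((2:ℝ)^k)⁻¹^j) := by ring
        _ = (‖c‖ * 2 ^ |δ| * M) * (2:ℝ) ^ ((k:ℝ) * (δ - (j:ℝ))) := by
            rw [two_pow_helper]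
        _ ≤ (‖c‖ * 2 ^ |δ| * M) * (2:ℝ) ^ ((k:ℝ) * e) := by
            apply mul_le_mul_of_nonneg_left _ (by positivity)
            apply Real.rpow_le_rpow_of_exponent_le (by norm_num)
            apply mul_le_mul_of_nonneg_left h (by positivity)
        _ ≤ (‖c‖ * 2 ^ |δ| * M + 1) * (2:ℝ) ^ ((k:ℝ) * e) := by nlinarith
    · -- outside support
      push_neg at hmem
      have : sTerm α φ c δ j k l = 0 := by
        have := DyadRep.eq_zero hφsupp (DyadRep.term (α := α) (φ := φ) e c δ j h) k l hl
        apply this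
        rcases le_or_gt (2^k/2) l with h' | h'
        · exact Or.inr (hmem h')
        · exact Or.inl h'
      show ‖sTerm α φ c δ j k l‖ ≤ _
      rw [this]
      simp only [norm_zero]
      positivity
lemma iteratedDeriv_chain {f : ℕ → ℝ → ℂ} (n : ℕ)
    (h : ∀ m, m < n → ∀ x : ℝ, HasDerivAt (f m) (f (m+1) x) x) :
    iteratedDeriv n (f 0) = f n := by
  induction n with
  | zero => simp
  | succ n ih =>
    rw [iteratedDeriv_succ, ih (fun m hm => h m (hm.trans (Nat.lt_succ_self n)))]
    funext x
    exact (h n (Nat.lt_succ_self n) x).deriv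

lemma integrableOn_Ioi_of_support {E : Type*} [NormedAddCommGroup E] {f : ℝ → E} {A B : ℝ}
    (hA : 0 < A) (hcont : ContinuousOn f (Set.Ioi 0))
    (h0 : ∀ l : ℝ, 0 < l → (l ≤ A ∨ B ≤ l) → f l = 0) :
    IntegrableOn f (Set.Ioi 0) := by
  have hIcc : IntegrableOn f (Set.Icc A B) :=
    (hcont.mono (fun x hx => lt_of_lt_of_le hA hx.1)).integrableOn_Icc
  have hdiff : IntegrableOn f (Set.Ioi 0 \ Set.Icc A B) := by
    refine MeasureTheory.IntegrableOn.congr_fun (MeasureTheory.integrableOn_zero) ?_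
      (measurableSet_Ioi.diff measurableSet_Icc)
    intro x hx
    rw [Set.mem_diff, Set.mem_Icc, not_and_or, not_le, not_le] at hx
    exact (h0 x hx.1 (hx.2.imp le_of_lt le_of_lt)).symm
  refine (hIcc.union hdiff).mono_set (fun x hx => ?_)
  by_cases h : x ∈ Set.Icc A B
  · exact Or.inl h
  · exact Or.inr ⟨hx, h⟩

lemma integral_Ioi_eq_intervalIntegral {f : ℝ → ℂ} {A B : ℝ} (hA : 0 < A) (hAB : A ≤ B)
    (hcont : ContinuousOn f (Set.Ioi 0))
    (h0 : ∀ l : ℝ, 0 < l → (l ≤ A ∨ B ≤ l) → f l = 0) :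
    ∫ l in Set.Ioi (0:ℝ), f l = ∫ l in A..B, f l := by
  have hint : IntegrableOn f (Set.Ioi 0) := integrableOn_Ioi_of_support hA hcont h0
  have hB : (0:ℝ) < B := lt_of_lt_of_le hA hAB
  have h1 : Set.Ioi (0:ℝ) = Set.Ioc 0 B ∪ Set.Ioi B := (Set.Ioc_union_Ioi_eq_Ioi hB.le).symm
  have h2 : Set.Ioc (0:ℝ) B = Set.Ioc 0 A ∪ Set.Ioc A B :=
    (Set.Ioc_union_Ioc_eq_Ioc hA.le hAB).symm
  have hd1 : Disjoint (Set.Ioc (0:ℝ) B) (Set.Ioi B) := by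
    rw [Set.disjoint_left]; intro x hx hx'; exact absurd hx.2 (not_le.mpr hx')
  have hd2 : Disjoint (Set.Ioc (0:ℝ) A) (Set.Ioc A B) := by
    rw [Set.disjoint_left]; intro x hx hx'; exact absurd hx.2 (not_le.mpr hx'.1)
  have hi1 : IntegrableOn f (Set.Ioc 0 B) := hint.mono_set (by rw [h1]; exact Set.subset_union_left)
  have hi2 : IntegrableOn f (Set.Ioi B) := hint.mono_set (by rw [h1]; exact Set.subset_union_right)
  have hi3 : IntegrableOn f (Set.Ioc 0 A) := hi1.mono_set (by rw [h2]; exact Set.subset_union_left)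
  have hi4 : IntegrableOn f (Set.Ioc A B) := hi1.mono_set (by rw [h2]; exact Set.subset_union_right)
  rw [intervalIntegral.integral_of_le hAB, h1,
    MeasureTheory.setIntegral_union hd1 measurableSet_Ioi hi1 hi2, h2,
    MeasureTheory.setIntegral_union hd2 measurableSet_Ioc hi3 hi4]
  have hz1 : ∫ l in Set.Ioi B, f l = 0 := by
    rw [MeasureTheory.setIntegral_congr_fun measurableSet_Ioi
      (fun x hx => h0 x (hB.trans hx) (Or.inr (le_of_lt hx)))]
    simp
  have hz2 : ∫ l in Set.Ioc (0:ℝ) A, f l = 0 := by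
    rw [MeasureTheory.setIntegral_congr_fun measurableSet_Ioc
      (g := fun _ => (0:ℂ)) ?_]
    · simp
    · intro x hx
      exact h0 x hx.1 (Or.inl hx.2)
  rw [hz1, hz2]
  ring
lemma ibp_step {u v : ℝ → ℂ} {A B : ℝ} (hAB : A ≤ B) {d : ℂ} (hd : d ≠ 0)
    (hu : ∀ l ∈ Set.uIcc A B, HasDerivAt u (v l) l)
    (hv : ContinuousOn v (Set.uIcc A B))
    (hA0 : u A = 0) (hB0 : u B = 0) :
    ∫ l in A..B, u l * Complex.exp (d * l) =
      -d⁻¹ * ∫ l in A..B, v l * Complex.exp (d * l) := by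
  have hucont : ContinuousOn u (Set.uIcc A B) :=
    fun l hl => (hu l hl).continuousAt.continuousWithinAt
  have hecont : Continuous fun l : ℝ => Complex.exp (d * l) :=
    Complex.continuous_exp.comp (continuous_const.mul Complex.continuous_ofReal)
  have hder : ∀ l ∈ Set.uIcc A B, HasDerivAt (fun l : ℝ => u l * Complex.exp (d * l))
      (v l * Complex.exp (d * l) + u l * (Complex.exp (d * l) * d)) l := by
    intro l hl
    have h1 : HasDerivAt (fun x : ℝ => d * (x:ℂ)) d l := by
      simpa using ((hasDerivAt_id l).ofReal_comp).const_mul d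
    exact (hu l hl).mul h1.cexp
  have hint1 : IntervalIntegrable (fun l => v l * Complex.exp (d * l)) volume A B :=
    (hv.mul hecont.continuousOn).intervalIntegrable
  have hint2 : IntervalIntegrable (fun l => u l * (Complex.exp (d * l) * d)) volume A B :=
    (hucont.mul (hecont.continuousOn.mul continuousOn_const)).intervalIntegrable
  have key := intervalIntegral.integral_eq_sub_of_hasDerivAt hder (hint1.add hint2)
  rw [hB0, hA0, zero_mul, zero_mul, sub_zero,
    intervalIntegral.integral_add hint1 hint2] at key
  have hre : (fun l : ℝ => u l * (Complex.exp (d * l) * d)) =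
      fun l : ℝ => (u l * Complex.exp (d * l)) * d := by funext l; ring
  rw [hre, intervalIntegral.integral_mul_const] at key
  field_simp
  linear_combination key

lemma rep_ibp {α : ℝ} (hα0 : 0 < α) (hα1 : α < 1) {φ : ℝ → ℝ}
    (hφ : ContDiff ℝ (⊤ : ℕ∞) φ)
    (hφsupp : ∀ x : ℝ, φ x ≠ 0 → 1 / 2 ≤ |x| ∧ |x| ≤ 2)
    (N : ℕ) {e : ℝ} {f : ℕ → ℝ → ℂ} (hf : DyadRep α φ e f) :
    ∃ g : ℕ → ℝ → ℂ, DyadRep α φ (e - N * (1 - α)) g ∧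
      ∀ k : ℕ, 1 ≤ k → ∀ d : ℂ, d ≠ 0 →
        ∫ l in (2^k/4 : ℝ)..(4*2^k : ℝ), f k l * Complex.exp (d * l) =
          (-d⁻¹)^N * ∫ l in (2^k/4 : ℝ)..(4*2^k : ℝ), g k l * Complex.exp (d * l) := by
  induction N with
  | zero =>
    refine ⟨f, by simpa using hf, fun k hk d hd => by simp⟩
  | succ N ih =>
    obtain ⟨g, hg, hval⟩ := ih
    obtain ⟨g', hg', hder⟩ := DyadRep.hasDerivAt' hα0 hα1 hφ hg
    refine ⟨g', ?_, fun k hk d hd => ?_⟩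
    · have : e - (N+1 : ℕ) * (1 - α) = (e - N * (1 - α)) - (1 - α) := by push_cast; ring
      rw [this]
      exact hg'
    · have h2k : (0:ℝ) < 2^k := by positivity
      have hAB : (2^k/4 : ℝ) ≤ (4*2^k : ℝ) := by nlinarith
      have hsub : Set.uIcc (2^k/4 : ℝ) (4*2^k : ℝ) ⊆ Set.Ioi 0 := by
        rw [Set.uIcc_of_le hAB]
        intro x hx
        have := hx.1
        simp only [Set.mem_Ioi]
        linarith [h2k]
      have hstep : ∫ l in (2^k/4 : ℝ)..(4*2^k : ℝ), g k l * Complex.exp (d * l) =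
          -d⁻¹ * ∫ l in (2^k/4 : ℝ)..(4*2^k : ℝ), g' k l * Complex.exp (d * l) := by
        apply ibp_step hAB hd
        · intro l hl
          exact hder k l (hsub hl)
        · intro l hl
          obtain ⟨g'', _, hder'⟩ := DyadRep.hasDerivAt' hα0 hα1 hφ hg'
          exact (hder' k l (hsub hl)).continuousAt.continuousWithinAt
        · apply DyadRep.eq_zero hφsupp hg k _ (by positivity)
          left; nlinarith
        · apply DyadRep.eq_zero hφsupp hg k _ (by positivity)
          right; nlinarith
      rw [hval k hk d hd, hstep, pow_succ]
      ring
noncomputable def wFun (α β : ℝ) (φ : ℝ → ℝ) (k : ℕ) (l : ℝ) : ℂ :=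
  ((l ^ (-β) * φ (l / 2 ^ k) : ℝ) : ℂ) * Complex.exp (Complex.I * ((l ^ α : ℝ) : ℂ))

noncomputable def fInt (α β : ℝ) (φ : ℝ → ℝ) (k : ℕ) (t : ℝ) (m : ℕ) (σ : ℝ) (x l : ℝ) : ℂ :=
  wFun α β φ k l * (((σ * l / t : ℝ) : ℂ) * Complex.I)^m *
    Complex.exp (((σ * l * x / t : ℝ) : ℂ) * Complex.I)

section FIntFacts

variable {α β : ℝ} {φ : ℝ → ℝ} {k : ℕ} {t : ℝ}

lemma wFun_eq_zero (hφsupp : ∀ x : ℝ, φ x ≠ 0 → 1 / 2 ≤ |x| ∧ |x| ≤ 2)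
    {l : ℝ} (hl : 0 < l) (hout : l ≤ 2^k/4 ∨ 4*2^k ≤ l) : wFun α β φ k l = 0 := by
  have h2k : (0:ℝ) < 2^k := by positivity
  have hz : φ (l / 2^k) = 0 := by
    by_contra h
    obtain ⟨h1, h2⟩ := hφsupp _ h
    rw [abs_of_pos (by positivity)] at h1 h2
    rw [le_div_iff₀ h2k] at h1
    rw [div_le_iff₀ h2k] at h2
    rcases hout with h' | h' <;> nlinarith
  simp [wFun, hz]

lemma fInt_eq_zero (hφsupp : ∀ x : ℝ, φ x ≠ 0 → 1 / 2 ≤ |x| ∧ |x| ≤ 2)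
    (m : ℕ) (σ x : ℝ) {l : ℝ} (hl : 0 < l) (hout : l ≤ 2^k/4 ∨ 4*2^k ≤ l) :
    fInt α β φ k t m σ x l = 0 := by
  simp [fInt, wFun_eq_zero hφsupp hl hout]

lemma wFun_continuousOn (hφ : ContDiff ℝ (⊤ : ℕ∞) φ) :
    ContinuousOn (wFun α β φ k) (Set.Ioi 0) := by
  have h1 : ContinuousOn (fun l : ℝ => l ^ (-β)) (Set.Ioi 0) := fun l hl =>
    (Real.continuousAt_rpow_const l (-β) (Or.inl (ne_of_gt hl))).continuousWithinAt
  have h2 : Continuous (fun l : ℝ => φ (l / 2^k)) :=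
    hφ.continuous.comp (continuous_id.div_const _)
  have h3 : ContinuousOn (fun l : ℝ => l ^ α) (Set.Ioi 0) := fun l hl =>
    (Real.continuousAt_rpow_const l α (Or.inl (ne_of_gt hl))).continuousWithinAt
  exact (Complex.continuous_ofReal.comp_continuousOn (h1.mul h2.continuousOn)).mul
    (Complex.continuous_exp.comp_continuousOn
      (continuousOn_const.mul (Complex.continuous_ofReal.comp_continuousOn h3)))

end FIntFacts
section FIntFacts2

variable {α β : ℝ} {φ : ℝ → ℝ} {k : ℕ} {t : ℝ}

lemma norm_exp_ofReal_mul_I (r : ℝ) : ‖Complex.exp (((r : ℝ) : ℂ) * Complex.I)‖ = 1 := by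
  rw [Complex.norm_exp_ofReal_mul_I]

lemma fInt_continuousOn (hφ : ContDiff ℝ (⊤ : ℕ∞) φ) (m : ℕ) (σ x : ℝ) :
    ContinuousOn (fun l => fInt α β φ k t m σ x l) (Set.Ioi 0) := by
  apply ((wFun_continuousOn hφ).mul _).mul _
  · exact (((Complex.continuous_ofReal.comp
      ((continuous_const.mul continuous_id).div_const t)).mul continuous_const).pow m).continuousOn
  · exact (Complex.continuous_exp.comp ((Complex.continuous_ofReal.comp
      (((continuous_const.mul continuous_id).mul continuous_const).div_const t)).mul
      continuous_const)).continuousOn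

lemma fInt_norm (ht : 0 < t) (m : ℕ) {σ : ℝ} (hσ : σ = 1 ∨ σ = -1) (x : ℝ) {l : ℝ}
    (hl : 0 < l) : ‖fInt α β φ k t m σ x l‖ = ‖wFun α β φ k l‖ * (l / t)^m := by
  have habs : |σ * l / t| = l / t := by
    rcases hσ with h | h <;> rw [h] <;>
      simp [abs_div, abs_of_pos hl, abs_of_pos ht]
  rw [fInt, norm_mul, norm_mul, norm_exp_ofReal_mul_I, mul_one, norm_pow, norm_mul,
    Complex.norm_I, mul_one, Complex.norm_real, Real.norm_eq_abs, habs]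

lemma fInt_integrableOn (hφ : ContDiff ℝ (⊤ : ℕ∞) φ)
    (hφsupp : ∀ x : ℝ, φ x ≠ 0 → 1 / 2 ≤ |x| ∧ |x| ≤ 2) (m : ℕ) (σ x : ℝ) :
    IntegrableOn (fun l => fInt α β φ k t m σ x l) (Set.Ioi 0) := by
  apply integrableOn_Ioi_of_support (A := 2^k/4) (B := 4*2^k) (by positivity)
    (fInt_continuousOn hφ m σ x)
  exact fun l hl hout => fInt_eq_zero hφsupp m σ x hl hout

lemma fInt_hasDerivAt (m : ℕ) (σ : ℝ) (l : ℝ) (x : ℝ) :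
    HasDerivAt (fun x' => fInt α β φ k t m σ x' l) (fInt α β φ k t (m+1) σ x l) x := by
  have hinner : HasDerivAt (fun x' : ℝ => σ * l * x' / t) (σ * l / t) x := by
    simpa using ((hasDerivAt_id x).const_mul (σ * l)).div_const t
  have hphase : HasDerivAt (fun x' : ℝ => Complex.exp (((σ * l * x' / t : ℝ) : ℂ) * Complex.I))
      (Complex.exp (((σ * l * x / t : ℝ) : ℂ) * Complex.I) * (((σ * l / t : ℝ) : ℂ) * Complex.I))
      x := (hinner.ofReal_comp.mul_const Complex.I).cexp
  have := hphase.const_mul (wFun α β φ k l * (((σ * l / t : ℝ) : ℂ) * Complex.I)^m)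
  convert this using 1
  · rfl
  · rfl
  simp only [fInt, pow_succ]
  ring

lemma fInt_sum_hasDerivAt (hφ : ContDiff ℝ (⊤ : ℕ∞) φ)
    (hφsupp : ∀ x : ℝ, φ x ≠ 0 → 1 / 2 ≤ |x| ∧ |x| ≤ 2) (ht : 0 < t) (m : ℕ) (x₀ : ℝ) :
    HasDerivAt (fun x => ∫ l in Set.Ioi (0:ℝ),
        (fInt α β φ k t m 1 x l + fInt α β φ k t m (-1) x l))
      (∫ l in Set.Ioi (0:ℝ),
        (fInt α β φ k t (m+1) 1 x₀ l + fInt α β φ k t (m+1) (-1) x₀ l)) x₀ := by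
  have hmeas : ∀ m' x, AEStronglyMeasurable
      (fun l => fInt α β φ k t m' 1 x l + fInt α β φ k t m' (-1) x l)
      (volume.restrict (Set.Ioi (0:ℝ))) := fun m' x =>
    (((fInt_continuousOn hφ m' 1 x).add (fInt_continuousOn hφ m' (-1) x)).aestronglyMeasurable
      measurableSet_Ioi)
  have hbound_int : IntegrableOn (fun l => 2 * ‖wFun α β φ k l‖ * (l / t)^(m+1))
      (Set.Ioi (0:ℝ)) := by
    apply integrableOn_Ioi_of_support (A := 2^k/4) (B := 4*2^k) (by positivity)
    · exact (continuous_const.continuousOn.mul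
        ((wFun_continuousOn hφ).norm)).mul
        ((continuous_id.div_const t).pow (m+1)).continuousOn
    · intro l hl hout
      rw [wFun_eq_zero hφsupp hl hout]
      simp
  refine (hasDerivAt_integral_of_dominated_loc_of_deriv_le
    (F := fun x l => fInt α β φ k t m 1 x l + fInt α β φ k t m (-1) x l)
    (F' := fun x l => fInt α β φ k t (m+1) 1 x l + fInt α β φ k t (m+1) (-1) x l)
    (bound := fun l => 2 * ‖wFun α β φ k l‖ * (l / t)^(m+1))
    (hs := Metric.ball_mem_nhds x₀ one_pos)
    (Filter.Eventually.of_forall (fun x => hmeas m x))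
    ?_ (hmeas (m+1) x₀) ?_ hbound_int ?_).2
  · exact (fInt_integrableOn hφ hφsupp m 1 x₀).add (fInt_integrableOn hφ hφsupp m (-1) x₀)
  · refine Filter.eventually_of_mem (self_mem_ae_restrict measurableSet_Ioi) ?_
    intro l hl x _
    calc ‖fInt α β φ k t (m+1) 1 x l + fInt α β φ k t (m+1) (-1) x l‖
        ≤ ‖fInt α β φ k t (m+1) 1 x l‖ + ‖fInt α β φ k t (m+1) (-1) x l‖ := norm_add_le _ _
      _ = 2 * ‖wFun α β φ k l‖ * (l / t)^(m+1) := by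
          rw [fInt_norm ht (m+1) (Or.inl rfl) x hl, fInt_norm ht (m+1) (Or.inr rfl) x hl]
          ring
  · refine Filter.Eventually.of_forall ?_
    intro l x _
    exact (fInt_hasDerivAt m 1 l x).add (fInt_hasDerivAt m (-1) l x)

lemma muHat_eq_fInt (ht : 0 < t) (x : ℝ) :
    muHatPiece α β φ k (x / t) =
      ∫ l in Set.Ioi (0:ℝ), (fInt α β φ k t 0 1 x l + fInt α β φ k t 0 (-1) x l) := by
  rw [muHatPiece, ← MeasureTheory.integral_const_mul]
  apply MeasureTheory.setIntegral_congr_fun measurableSet_Ioi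
  intro l hl
  simp only [fInt, pow_zero, mul_one]
  rw [wFun]
  push_cast
  have h2c := Complex.two_cos (x := ((x / t * l : ℝ) : ℂ))
  have e1 : ((x / t * l : ℝ) : ℂ) * Complex.I = ((1 * l * x / t : ℝ) : ℂ) * Complex.I := by
    push_cast; ring
  have e2 : -((x / t * l : ℝ) : ℂ) * Complex.I = ((-1 * l * x / t : ℝ) : ℂ) * Complex.I := by
    push_cast; ring
  rw [e1, e2] at h2c
  push_cast at h2c ⊢
  linear_combination (((l ^ (-β) : ℝ) : ℂ) * ((φ (l / 2^k) : ℝ) : ℂ) * Complex.exp (Complex.I * ((l ^ α : ℝ) : ℂ))) * h2c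
lemma sigma_bound (α β : ℝ) (hα0 : 0 < α) (hα1 : α < 1) (ℓ N : ℕ) (φ : ℝ → ℝ)
    (hφ : ContDiff ℝ (⊤ : ℕ∞) φ) (hφsupp : ∀ x : ℝ, φ x ≠ 0 → 1 / 2 ≤ |x| ∧ |x| ≤ 2) :
    ∃ C : ℝ, 0 < C ∧ ∀ k : ℕ, 1 ≤ k → ∀ t : ℝ, 0 < t → ∀ s : ℝ, 0 < s →
      ∀ σ : ℝ, (σ = 1 ∨ σ = -1) →
      ‖∫ l in Set.Ioi (0:ℝ), fInt α β φ k t ℓ σ s l‖ ≤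
        C * (2:ℝ) ^ ((k:ℝ) * ((ℓ:ℝ) + 1 - β - (N:ℝ) * (1 - α))) *
          t ^ ((N:ℝ) - (ℓ:ℝ)) * s ^ (-(N:ℝ)) := by
  have hbase : DyadRep α φ ((ℓ:ℝ) - β) (fun k l => sTerm α φ 1 ((ℓ:ℝ) - β) 0 k l) :=
    DyadRep.term ((ℓ:ℝ) - β) 1 ((ℓ:ℝ) - β) 0 (by simp)
  obtain ⟨g, hg, hibp⟩ := rep_ibp hα0 hα1 hφ hφsupp N hbase
  obtain ⟨C, hC, hCb⟩ := DyadRep.norm_bound hφ hφsupp hg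
  refine ⟨8 * C, by positivity, fun k hk t ht s hs σ hσ => ?_⟩
  have h2k : (0:ℝ) < 2^k := by positivity
  have hApos : (0:ℝ) < 2^k/4 := by positivity
  have hAB : (2^k/4 : ℝ) ≤ 4*2^k := by nlinarith
  set dσ : ℂ := ((σ * s / t : ℝ) : ℂ) * Complex.I with hd
  have habs : |σ * s / t| = s / t := by
    rcases hσ with h | h <;> rw [h] <;> simp [abs_div, abs_of_pos hs, abs_of_pos ht]
  have hne : σ * s / t ≠ 0 := by
    intro h0
    rw [h0, abs_zero] at habs
    have := div_pos hs ht
    linarith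
  have hd0 : dσ ≠ 0 := mul_ne_zero (Complex.ofReal_ne_zero.mpr hne) Complex.I_ne_zero
  have hnormd : ‖dσ‖ = s / t := by
    rw [hd, norm_mul, Complex.norm_I, mul_one, Complex.norm_real, Real.norm_eq_abs, habs]
  have hIoi : ∫ l in Set.Ioi (0:ℝ), fInt α β φ k t ℓ σ s l =
      ∫ l in (2^k/4 : ℝ)..(4*2^k : ℝ), fInt α β φ k t ℓ σ s l :=
    integral_Ioi_eq_intervalIntegral hApos hAB (fInt_continuousOn hφ ℓ σ s)
      (fun l hl hout => fInt_eq_zero hφsupp ℓ σ s hl hout)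
  set Cσ : ℂ := (((σ / t : ℝ) : ℂ) * Complex.I)^ℓ with hCσ
  have hptw : ∀ l ∈ Set.uIcc (2^k/4 : ℝ) (4*2^k : ℝ), fInt α β φ k t ℓ σ s l =
      Cσ * (sTerm α φ 1 ((ℓ:ℝ) - β) 0 k l * Complex.exp (dσ * l)) := by
    intro l hl
    rw [Set.uIcc_of_le hAB] at hl
    have hlpos : 0 < l := lt_of_lt_of_le hApos hl.1
    have hsplit : l ^ ((ℓ:ℝ) - β) = l ^ (ℓ:ℕ) * l ^ (-β) := by
      rw [show (ℓ:ℝ) - β = (ℓ:ℝ) + (-β) by ring, Real.rpow_add hlpos, Real.rpow_natCast]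
    have hexp : Complex.exp (((σ * l * s / t : ℝ) : ℂ) * Complex.I) =
        Complex.exp (dσ * l) := by
      rw [hd]; congr 1; push_cast; ring
    simp only [fInt, wFun, sTerm, pow_zero, iteratedDeriv_zero, mul_one, one_mul, hCσ]
    rw [hexp, hsplit]
    push_cast
    ring
  have hci : ∫ l in (2^k/4 : ℝ)..(4*2^k : ℝ), fInt α β φ k t ℓ σ s l =
      Cσ * ∫ l in (2^k/4 : ℝ)..(4*2^k : ℝ),
        sTerm α φ 1 ((ℓ:ℝ) - β) 0 k l * Complex.exp (dσ * l) := by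
    rw [intervalIntegral.integral_congr hptw, intervalIntegral.integral_const_mul]
  have hI := hibp k hk dσ hd0
  have hgb : ‖∫ l in (2^k/4 : ℝ)..(4*2^k : ℝ), g k l * Complex.exp (dσ * l)‖ ≤
      (C * (2:ℝ)^((k:ℝ) * ((ℓ:ℝ) - β - (N:ℝ) * (1-α)))) * |(4*2^k : ℝ) - (2^k/4 : ℝ)| := by
    apply intervalIntegral.norm_integral_le_of_norm_le_const
    intro x hx
    rw [Set.uIoc_of_le hAB] at hx
    have hxpos : 0 < x := lt_trans hApos hx.1
    have hexp1 : ‖Complex.exp (dσ * x)‖ = 1 := by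
      have he : dσ * x = ((σ * s / t * x : ℝ) : ℂ) * Complex.I := by rw [hd]; push_cast; ring
      rw [he, norm_exp_ofReal_mul_I]
    rw [norm_mul, hexp1, mul_one]
    exact hCb k hk x hxpos
  have hBA : |(4*2^k : ℝ) - (2^k/4 : ℝ)| ≤ 4 * 2^k := by
    rw [abs_of_nonneg (by linarith)]; linarith
  have hnormC : ‖Cσ‖ = (1/t)^ℓ := by
    rw [hCσ, norm_pow, norm_mul, Complex.norm_I, mul_one, Complex.norm_real, Real.norm_eq_abs]
    congr 1
    rcases hσ with h | h <;> rw [h] <;> rw [abs_div, abs_of_pos ht] <;> norm_num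
  have hndinv : ‖(-dσ⁻¹)^N‖ = (t/s)^N := by
    rw [norm_pow, norm_neg, norm_inv, hnormd, inv_div]
  have hgb2 : ‖∫ l in (2^k/4 : ℝ)..(4*2^k : ℝ), g k l * Complex.exp (dσ * l)‖ ≤
      (C * (2:ℝ)^((k:ℝ) * ((ℓ:ℝ) - β - (N:ℝ) * (1-α)))) * (4 * 2^k) :=
    hgb.trans (mul_le_mul_of_nonneg_left hBA (by positivity))
  have hE : (2:ℝ)^((k:ℝ) * ((ℓ:ℝ) - β - (N:ℝ) * (1-α))) * (2:ℝ)^k =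
      (2:ℝ)^((k:ℝ) * ((ℓ:ℝ) + 1 - β - (N:ℝ) * (1-α))) := by
    rw [← Real.rpow_natCast 2 k, ← Real.rpow_add (by norm_num : (0:ℝ) < 2)]
    congr 1
    ring
  have e1 : ((1:ℝ)/t)^ℓ * (t/s)^N = t^((N:ℝ)-(ℓ:ℝ)) * s^(-(N:ℝ)) := by
    rw [Real.rpow_sub ht, Real.rpow_neg hs.le, Real.rpow_natCast, Real.rpow_natCast,
      Real.rpow_natCast]
    rw [div_pow, div_pow, one_pow]
    field_simp
  calc ‖∫ l in Set.Ioi (0:ℝ), fInt α β φ k t ℓ σ s l‖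
      = ‖Cσ‖ * (‖(-dσ⁻¹)^N‖ *
        ‖∫ l in (2^k/4 : ℝ)..(4*2^k : ℝ), g k l * Complex.exp (dσ * l)‖) := by
        rw [hIoi, hci, hI, norm_mul, norm_mul]
    _ ≤ (1/t)^ℓ * ((t/s)^N *
        ((C * (2:ℝ)^((k:ℝ) * ((ℓ:ℝ) - β - (N:ℝ) * (1-α)))) * (4 * 2^k))) := by
        rw [hnormC, hndinv]
        exact mul_le_mul_of_nonneg_left (mul_le_mul_of_nonneg_left hgb2 (by positivity))
          (by positivity)
    _ = (4*C) * ((2:ℝ)^((k:ℝ) * ((ℓ:ℝ) - β - (N:ℝ) * (1-α))) * (2:ℝ)^k) *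
        (((1:ℝ)/t)^ℓ * (t/s)^N) := by ring
    _ = (4*C) * (2:ℝ)^((k:ℝ) * ((ℓ:ℝ) + 1 - β - (N:ℝ) * (1-α))) *
        (t^((N:ℝ)-(ℓ:ℝ)) * s^(-(N:ℝ))) := by rw [hE, e1]
    _ ≤ (8*C) * (2:ℝ)^((k:ℝ) * ((ℓ:ℝ) + 1 - β - (N:ℝ) * (1-α))) *
        (t^((N:ℝ)-(ℓ:ℝ)) * s^(-(N:ℝ))) := by
        have h1 : (0:ℝ) < (2:ℝ)^((k:ℝ) * ((ℓ:ℝ) + 1 - β - (N:ℝ) * (1-α))) :=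
          Real.rpow_pos_of_pos (by norm_num) _
        have h2 : (0:ℝ) < t^((N:ℝ)-(ℓ:ℝ)) := Real.rpow_pos_of_pos ht _
        have h3 : (0:ℝ) < s^(-(N:ℝ)) := Real.rpow_pos_of_pos hs _
        have : (4*C) ≤ 8*C := by linarith
        nlinarith [mul_pos h2 h3, mul_pos h1 (mul_pos h2 h3)]
    _ = 8 * C * (2:ℝ) ^ ((k:ℝ) * ((ℓ:ℝ) + 1 - β - (N:ℝ) * (1 - α))) *
        t ^ ((N:ℝ) - (ℓ:ℝ)) * s ^ (-(N:ℝ)) := by ring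

/-- the integration-by-parts estimate in Section 4. For every `k ≥ 1`,
`t > 0` and `s > 0`,
`|(d/ds)^ℓ μ̂_{α,β,k}(s/t)| ≤ C 2^{k(ℓ+1−β−N(1−α))} t^{N−ℓ} s^{−N}`. -/
theorem stmt8 (α β : ℝ) (hα0 : 0 < α) (hα1 : α < 1) (hβ : 0 < β) (ℓ N : ℕ)
    (φ : ℝ → ℝ) (hφ : ContDiff ℝ (⊤ : ℕ∞) φ) (hφnonneg : ∀ x, 0 ≤ φ x)
    (hφeven : ∀ x, φ (-x) = φ x)
    (hφsupp : ∀ x : ℝ, φ x ≠ 0 → 1 / 2 ≤ |x| ∧ |x| ≤ 2) :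
    ∃ C : ℝ, 0 < C ∧
      ∀ k : ℕ, 1 ≤ k → ∀ t : ℝ, 0 < t → ∀ s : ℝ, 0 < s →
        ‖iteratedDeriv ℓ (fun s' : ℝ => muHatPiece α β φ k (s' / t)) s‖ ≤
          C * 2 ^ ((k : ℝ) * ((ℓ : ℝ) + 1 - β - (N : ℝ) * (1 - α))) *
            t ^ ((N : ℝ) - (ℓ : ℝ)) * s ^ (-(N : ℝ)) := by
  obtain ⟨C, hC, hb⟩ := sigma_bound α β hα0 hα1 ℓ N φ hφ hφsupp
  refine ⟨2 * C, by linarith, fun k hk t ht s hs => ?_⟩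
  have hchain : iteratedDeriv ℓ (fun s' : ℝ => muHatPiece α β φ k (s' / t)) =
      fun x => ∫ l in Set.Ioi (0:ℝ),
        (fInt α β φ k t ℓ 1 x l + fInt α β φ k t ℓ (-1) x l) := by
    have hf0 : (fun s' : ℝ => muHatPiece α β φ k (s' / t)) =
        (fun x => ∫ l in Set.Ioi (0:ℝ),
          (fInt α β φ k t 0 1 x l + fInt α β φ k t 0 (-1) x l)) :=
      funext (fun x => muHat_eq_fInt ht x)
    rw [hf0]
    exact iteratedDeriv_chain ℓ (fun m _ x => fInt_sum_hasDerivAt hφ hφsupp ht m x)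
  rw [hchain]
  show ‖∫ l in Set.Ioi (0:ℝ), (fInt α β φ k t ℓ 1 s l + fInt α β φ k t ℓ (-1) s l)‖ ≤ _
  rw [MeasureTheory.integral_add (fInt_integrableOn hφ hφsupp ℓ 1 s)
    (fInt_integrableOn hφ hφsupp ℓ (-1) s)]
  calc ‖(∫ l in Set.Ioi (0:ℝ), fInt α β φ k t ℓ 1 s l) +
        ∫ l in Set.Ioi (0:ℝ), fInt α β φ k t ℓ (-1) s l‖
      ≤ ‖∫ l in Set.Ioi (0:ℝ), fInt α β φ k t ℓ 1 s l‖ +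
        ‖∫ l in Set.Ioi (0:ℝ), fInt α β φ k t ℓ (-1) s l‖ := norm_add_le _ _
    _ ≤ C * (2:ℝ) ^ ((k:ℝ) * ((ℓ:ℝ) + 1 - β - (N:ℝ) * (1 - α))) *
          t ^ ((N:ℝ) - (ℓ:ℝ)) * s ^ (-(N:ℝ)) +
        C * (2:ℝ) ^ ((k:ℝ) * ((ℓ:ℝ) + 1 - β - (N:ℝ) * (1 - α))) *
          t ^ ((N:ℝ) - (ℓ:ℝ)) * s ^ (-(N:ℝ)) :=
        add_le_add (hb k hk t ht s hs 1 (Or.inl rfl)) (hb k hk t ht s hs (-1) (Or.inr rfl))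
    _ = 2 * C * 2 ^ ((k : ℝ) * ((ℓ : ℝ) + 1 - β - (N : ℝ) * (1 - α))) *
          t ^ ((N : ℝ) - (ℓ : ℝ)) * s ^ (-(N : ℝ)) := by ring
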